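/- arXiv:1803.02788 — 5 statements merged into one kernel-verified Lean document; each statement's English description precedes it below -/
import Mathlib

section
/- Let G = (C ∪ S, E) be bi-separable of order p with partition into maximal independent sets I_1 = A_1 ∪ B_1, …, I_p = A_p ∪ B_p. Then for every i ∈ {1, …, p} and every c ∈ A_i, the neighborhood of c equals S \ B_i (i.e., S(c) = S \ B_i), and symmetrically for every s ∈ B_i, C(s) = C \ A_i. -/
/-- Lemma 2: in a bi-separable bipartite graph `G = (C ∪ S, E)` of order `p`, with
partition into maximal independent sets `I_i = A_i ∪ B_i` (equivalently, the complement
bipartite graph has the `I_i` as its bipartite-connected components, so that every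
non-edge lies in some rectangle `A_i × B_i`), every `c ∈ A_i` has neighborhood
`S(c) = S \ B_i`, and every `s ∈ B_i` has neighborhood `C(s) = C \ A_i`. -/
theorem biseparable_neighborhoods
    {C S : Type*} [Fintype C] [Fintype S]
    (E : C → S → Prop) (p : ℕ) (A : Fin p → Set C) (B : Fin p → Set S)
    -- the `I_i = A_i ∪ B_i` partition `C ∪ S`
    (hA : ∀ c, ∃! i, c ∈ A i) (hB : ∀ s, ∃! i, s ∈ B i)
    -- each `I_i` is an independent set
    (hind : ∀ i, ∀ c ∈ A i, ∀ s ∈ B i, ¬ E c s)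
    -- every non-edge lies in some rectangle `A_i × B_i` (complement components)
    (hcompl : ∀ c s, ¬ E c s → ∃ i, c ∈ A i ∧ s ∈ B i)
    -- each `I_i` is maximal: `C \ (A_i ∪ C(B_i)) = ∅` and `S \ (B_i ∪ S(A_i)) = ∅`
    (hmax : ∀ i, (∀ c, c ∈ A i ∨ ∃ s ∈ B i, E c s) ∧
                 (∀ s, s ∈ B i ∨ ∃ c ∈ A i, E c s)) :
    (∀ i, ∀ c ∈ A i, {s | E c s} = (B i)ᶜ) ∧
    (∀ i, ∀ s ∈ B i, {c | E c s} = (A i)ᶜ) := by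
  constructor
  · intro i c hc
    ext s
    simp only [Set.mem_setOf_eq, Set.mem_compl_iff]
    constructor
    · intro hE hs; exact hind i c hc s hs hE
    · intro hs
      by_contra hE
      obtain ⟨j, hcj, hsj⟩ := hcompl c s hE
      obtain ⟨i', _, hu⟩ := hA c
      exact hs ((hu i hc ▸ hu j hcj : j = i) ▸ hsj)
  · intro i s hs
    ext c
    simp only [Set.mem_setOf_eq, Set.mem_compl_iff]
    constructor
    · intro hE hc; exact hind i c hc s hs hE
    · intro hc
      by_contra hE
      obtain ⟨j, hcj, hsj⟩ := hcompl c s hE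
      obtain ⟨i', _, hu⟩ := hB s
      exact hc ((hu i hs ▸ hu j hsj : j = i) ▸ hcj)
end

section
/- Let G = (C ∪ S, E) be bi-separable of order p with partition into maximal independent sets I_1 = A_1 ∪ B_1, …, I_p = A_p ∪ B_p. Then every independent set I = A ∪ B of G (A ⊆ C, B ⊆ S, A × B disjoint from E, A and B nonempty) is contained in some I_i, i.e., there exists i with A ⊆ A_i and B ⊆ B_i. -/
/-- In a bi-separable bipartite graph `G = (C ∪ S, E)` with partition into maximal
independent sets `I_1 = A_1 ∪ B_1, …, I_p = A_p ∪ B_p` (equivalently, every non-edge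
lies in some rectangle `A_i × B_i`), every independent set `I = A' ∪ B'` of `G`
with `A'` and `B'` nonempty is contained in some `I_i`. -/
theorem independent_set_subset_block
    {C S : Type*} [Fintype C] [Fintype S]
    (E : C → S → Prop) (p : ℕ) (A : Fin p → Set C) (B : Fin p → Set S)
    (hA : ∀ c, ∃! i, c ∈ A i) (hB : ∀ s, ∃! i, s ∈ B i)
    (hind : ∀ i, ∀ c ∈ A i, ∀ s ∈ B i, ¬ E c s)
    (hcompl : ∀ c s, ¬ E c s → ∃ i, c ∈ A i ∧ s ∈ B i)
    (hmax : ∀ i, (∀ c, c ∈ A i ∨ ∃ s ∈ B i, E c s) ∧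
                 (∀ s, s ∈ B i ∨ ∃ c ∈ A i, E c s))
    (A' : Set C) (B' : Set S) (hA' : A'.Nonempty) (hB' : B'.Nonempty)
    (hindep : ∀ c ∈ A', ∀ s ∈ B', ¬ E c s) :
    ∃ i, A' ⊆ A i ∧ B' ⊆ B i := by
  obtain ⟨c₀, hc₀⟩ := hA'
  obtain ⟨s₀, hs₀⟩ := hB'
  obtain ⟨i, hci, hsi⟩ := hcompl c₀ s₀ (hindep c₀ hc₀ s₀ hs₀)
  refine ⟨i, ?_, ?_⟩
  · intro c hc
    obtain ⟨j, ⟨hcj, hsj⟩⟩ := hcompl c s₀ (hindep c hc s₀ hs₀)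
    obtain ⟨k, _, hk⟩ := hB s₀
    have : j = i := (hk j hsj).trans (hk i hsi).symm
    rwa [this] at hcj
  · intro s hs
    obtain ⟨j, ⟨hcj, hsj⟩⟩ := hcompl c₀ s (hindep c₀ hc₀ s hs)
    obtain ⟨k, _, hk⟩ := hA c₀
    have : j = i := (hk j hcj).trans (hk i hci).symm
    rwa [this] at hsj
end

section
/- Let G = (C ∪ S, E) be bi-separable with maximal independent sets I_1 = A_1 ∪ B_1, …, I_p = A_p ∪ B_p, and let μ be a probability measure on C × S with marginals μ_C and μ_S. If μ satisfies condition (N): for every nonempty proper subset A ⊊ C, μ_C(A) < μ_S(S(A)), and for every nonempty proper B ⊊ S, μ_S(B) < μ_C(C(B)); then for every i with A_i ≠ ∅ and B_i ≠ ∅, μ(A_i × B_i) < μ(C(B_i) × S(A_i)). -/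
open Finset

/-- Condition (N) implies the per-block inequality for bi-separable graphs:
if `G = (C ∪ S, E)` is bi-separable with maximal independent sets `I_i = A_i ∪ B_i`,
the graph has no isolated vertices, and `μ` is a probability measure on `C × S`
satisfying condition (N) (`μ_C(A) < μ_S(S(A))` for all nonempty proper `A ⊊ C` and
`μ_S(B) < μ_C(C(B))` for all nonempty proper `B ⊊ S`), then for every `i` with
`A_i ≠ ∅` and `B_i ≠ ∅` one has `μ(A_i × B_i) < μ(C(B_i) × S(A_i))`. -/
theorem Ncond_implies_block_inequality
    {C S : Type*} [Fintype C] [Fintype S] [DecidableEq C] [DecidableEq S]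
    [Nonempty C] [Nonempty S]
    (E : Finset (C × S))
    (hnoisoC : ∀ c : C, ∃ s, (c, s) ∈ E) (hnoisoS : ∀ s : S, ∃ c, (c, s) ∈ E)
    (μ : C × S → ℝ) (hμ0 : ∀ x, 0 ≤ μ x) (hμ1 : ∑ x, μ x = 1)
    (p : ℕ) (A : Fin p → Finset C) (B : Fin p → Finset S)
    (hA : ∀ c, ∃! i, c ∈ A i) (hB : ∀ s, ∃! i, s ∈ B i)
    (hind : ∀ i, ∀ c ∈ A i, ∀ s ∈ B i, (c, s) ∉ E)
    (hcompl : ∀ c s, (c, s) ∉ E → ∃ i, c ∈ A i ∧ s ∈ B i)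
    (hmax : ∀ i, (∀ c, c ∈ A i ∨ ∃ s ∈ B i, (c, s) ∈ E) ∧
                 (∀ s, s ∈ B i ∨ ∃ c ∈ A i, (c, s) ∈ E))
    -- neighborhood operators
    (NS : Finset C → Finset S) (NC : Finset S → Finset C)
    (hNS : ∀ (A' : Finset C) (s : S), s ∈ NS A' ↔ ∃ c ∈ A', (c, s) ∈ E)
    (hNC : ∀ (B' : Finset S) (c : C), c ∈ NC B' ↔ ∃ s ∈ B', (c, s) ∈ E)
    -- condition (N)
    (hN1 : ∀ A' : Finset C, A'.Nonempty → A' ≠ Finset.univ →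
      ∑ x ∈ A' ×ˢ Finset.univ, μ x < ∑ x ∈ Finset.univ ×ˢ NS A', μ x)
    (hN2 : ∀ B' : Finset S, B'.Nonempty → B' ≠ Finset.univ →
      ∑ x ∈ Finset.univ ×ˢ B', μ x < ∑ x ∈ NC B' ×ˢ Finset.univ, μ x) :
    ∀ i, (A i).Nonempty → (B i).Nonempty →
      ∑ x ∈ A i ×ˢ B i, μ x < ∑ x ∈ NC (B i) ×ˢ NS (A i), μ x := by
  intro i hAi hBi
  have hNSeq : NS (A i) = (B i)ᶜ := by
    ext s
    rw [hNS, Finset.mem_compl]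
    constructor
    · rintro ⟨c, hc, hcs⟩ hs
      exact hind i c hc s hs hcs
    · intro hs
      rcases (hmax i).2 s with h | h
      · exact absurd h hs
      · exact h
  have hNCeq : NC (B i) = (A i)ᶜ := by
    ext c
    rw [hNC, Finset.mem_compl]
    constructor
    · rintro ⟨s, hs, hcs⟩ hc
      exact hind i c hc s hs hcs
    · intro hc
      rcases (hmax i).1 c with h | h
      · exact absurd h hc
      · exact h
  have hAne : A i ≠ Finset.univ := by
    obtain ⟨s, hs⟩ := hBi
    obtain ⟨c, hc⟩ := hnoisoS s
    intro h
    exact hind i c (h ▸ Finset.mem_univ c) s hs hc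
  have key1 : ∑ x ∈ A i ×ˢ B i, μ x + ∑ x ∈ A i ×ˢ (B i)ᶜ, μ x
      = ∑ x ∈ A i ×ˢ Finset.univ, μ x := by
    simp only [Finset.sum_product]
    rw [← Finset.sum_add_distrib]
    exact Finset.sum_congr rfl fun a _ => Finset.sum_add_sum_compl _ _
  have key2 : ∑ x ∈ A i ×ˢ (B i)ᶜ, μ x + ∑ x ∈ (A i)ᶜ ×ˢ (B i)ᶜ, μ x
      = ∑ x ∈ (Finset.univ : Finset C) ×ˢ (B i)ᶜ, μ x := by
    simp only [Finset.sum_product]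
    exact Finset.sum_add_sum_compl _ _
  have hN := hN1 (A i) hAi hAne
  rw [hNSeq] at hN
  rw [hNCeq, hNSeq]
  linarith
end

section
/- Let G = (C ∪ S, E) be bi-separable with partition into maximal independent sets I_1 = A_1 ∪ B_1, …, I_p = A_p ∪ B_p, and let μ be a probability measure on C × S with marginals μ_C, μ_S. Suppose for every i, μ(A_i × B_i) < μ(C(B_i) × S(A_i)). Then μ satisfies condition (S): for every nonempty independent set I = A ∪ B of G, μ_C(C(B)) + μ_S(S(A)) > 1 − μ(E ∩ (C∘(I) × S∘(I))), where C∘(I) = C \ (A ∪ C(B)) and S∘(I) = S \ (B ∪ S(A)). -/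
open Finset

lemma split_left_aux {C S : Type*} [Fintype C] [Fintype S] [DecidableEq C]
    (μ : C × S → ℝ) (sA : Finset C) (t : Finset S) :
    ∑ x ∈ Finset.univ ×ˢ t, μ x
      = ∑ x ∈ sA ×ˢ t, μ x + ∑ x ∈ (Finset.univ \ sA) ×ˢ t, μ x := by
  rw [Finset.sum_product, Finset.sum_product, Finset.sum_product, add_comm]
  exact (Finset.sum_sdiff (Finset.subset_univ sA)).symm

lemma split_right_aux {C S : Type*} [Fintype C] [Fintype S] [DecidableEq S]
    (μ : C × S → ℝ) (s : Finset C) (tB : Finset S) :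
    ∑ x ∈ s ×ˢ Finset.univ, μ x
      = ∑ x ∈ s ×ˢ tB, μ x + ∑ x ∈ s ×ˢ (Finset.univ \ tB), μ x := by
  rw [Finset.sum_product, Finset.sum_product, Finset.sum_product,
    ← Finset.sum_add_distrib]
  refine Finset.sum_congr rfl fun c _ => ?_
  rw [add_comm]
  exact (Finset.sum_sdiff (Finset.subset_univ tB)).symm

/-- The per-block inequality implies condition (S): if `G = (C ∪ S, E)` is bi-separable
with maximal independent sets `I_i = A_i ∪ B_i` and `μ` is a probability measure on
`C × S` with `μ(A_i × B_i) < μ(C(B_i) × S(A_i))` for every `i`, then for every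
independent set `I = A' ∪ B'` of `G` (with `A'`, `B'` nonempty),
`μ_C(C(B')) + μ_S(S(A')) > 1 − μ(E ∩ (C∘(I) × S∘(I)))`, where
`C∘(I) = C \ (A' ∪ C(B'))` and `S∘(I) = S \ (B' ∪ S(A'))`. -/
theorem block_inequality_implies_Scond
    {C S : Type*} [Fintype C] [Fintype S] [DecidableEq C] [DecidableEq S]
    (E : Finset (C × S))
    (μ : C × S → ℝ) (hμ0 : ∀ x, 0 ≤ μ x) (hμ1 : ∑ x, μ x = 1)
    (p : ℕ) (A : Fin p → Finset C) (B : Fin p → Finset S)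
    (hA : ∀ c, ∃! i, c ∈ A i) (hB : ∀ s, ∃! i, s ∈ B i)
    (hind : ∀ i, ∀ c ∈ A i, ∀ s ∈ B i, (c, s) ∉ E)
    (hcompl : ∀ c s, (c, s) ∉ E → ∃ i, c ∈ A i ∧ s ∈ B i)
    (hmax : ∀ i, (∀ c, c ∈ A i ∨ ∃ s ∈ B i, (c, s) ∈ E) ∧
                 (∀ s, s ∈ B i ∨ ∃ c ∈ A i, (c, s) ∈ E))
    -- neighborhood operators
    (NS : Finset C → Finset S) (NC : Finset S → Finset C)
    (hNS : ∀ (A' : Finset C) (s : S), s ∈ NS A' ↔ ∃ c ∈ A', (c, s) ∈ E)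
    (hNC : ∀ (B' : Finset S) (c : C), c ∈ NC B' ↔ ∃ s ∈ B', (c, s) ∈ E)
    -- the per-block inequality
    (hblock : ∀ i, ∑ x ∈ A i ×ˢ B i, μ x < ∑ x ∈ NC (B i) ×ˢ NS (A i), μ x) :
    ∀ (A' : Finset C) (B' : Finset S), A'.Nonempty → B'.Nonempty →
      (∀ c ∈ A', ∀ s ∈ B', (c, s) ∉ E) →
      (∑ x ∈ NC B' ×ˢ Finset.univ, μ x) + (∑ x ∈ Finset.univ ×ˢ NS A', μ x) >
        1 - ∑ x ∈ E ∩ ((Finset.univ \ (A' ∪ NC B')) ×ˢ (Finset.univ \ (B' ∪ NS A'))), μ x := by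
  intro A' B' hA' hB' hindep
  obtain ⟨c0, hc0⟩ := hA'
  obtain ⟨s0, hs0⟩ := hB'
  obtain ⟨i, hci, hsi⟩ := hcompl c0 s0 (hindep c0 hc0 s0 hs0)
  -- A' and B' are contained in block i
  have hAi : A' ⊆ A i := by
    intro c hc
    obtain ⟨j, hcj, hsj⟩ := hcompl c s0 (hindep c hc s0 hs0)
    have : j = i := (hB s0).unique hsj hsi
    rwa [this] at hcj
  have hBi : B' ⊆ B i := by
    intro s hs
    obtain ⟨j, hcj, hsj⟩ := hcompl c0 s (hindep c0 hc0 s hs)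
    have : j = i := (hA c0).unique hcj hci
    rwa [this] at hsj
  -- neighborhoods are exactly the complements of the block
  have hNCB : NC B' = Finset.univ \ A i := by
    ext c
    simp only [Finset.mem_sdiff, Finset.mem_univ, true_and, hNC]
    constructor
    · rintro ⟨s, hs, he⟩ hcA
      exact hind i c hcA s (hBi hs) he
    · intro hcA
      by_cases he : (c, s0) ∈ E
      · exact ⟨s0, hs0, he⟩
      · obtain ⟨j, hcj, hsj⟩ := hcompl c s0 he
        have : j = i := (hB s0).unique hsj hsi
        exact absurd (this ▸ hcj) hcA
  have hNSA : NS A' = Finset.univ \ B i := by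
    ext s
    simp only [Finset.mem_sdiff, Finset.mem_univ, true_and, hNS]
    constructor
    · rintro ⟨c, hc, he⟩ hsB
      exact hind i c (hAi hc) s hsB he
    · intro hsB
      by_cases he : (c0, s) ∈ E
      · exact ⟨c0, hc0, he⟩
      · obtain ⟨j, hcj, hsj⟩ := hcompl c0 s he
        have : j = i := (hA c0).unique hcj hci
        exact absurd (this ▸ hsj) hsB
  have hNCBi : NC (B i) = Finset.univ \ A i := by
    ext c
    simp only [Finset.mem_sdiff, Finset.mem_univ, true_and, hNC]
    constructor
    · rintro ⟨s, hs, he⟩ hcA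
      exact hind i c hcA s hs he
    · intro hcA
      rcases (hmax i).1 c with h | h
      · exact absurd h hcA
      · exact h
  have hNSAi : NS (A i) = Finset.univ \ B i := by
    ext s
    simp only [Finset.mem_sdiff, Finset.mem_univ, true_and, hNS]
    constructor
    · rintro ⟨c, hc, he⟩ hsB
      exact hind i c hc s hsB he
    · intro hsB
      rcases (hmax i).2 s with h | h
      · exact absurd h hsB
      · exact h
  -- the "interior" region contains no edges
  have hCsub : Finset.univ \ (A' ∪ NC B') ⊆ A i := by
    intro c hc
    rw [Finset.mem_sdiff, Finset.mem_union] at hc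
    by_contra h
    exact hc.2 (Or.inr (by simp [hNCB, h]))
  have hSsub : Finset.univ \ (B' ∪ NS A') ⊆ B i := by
    intro s hs
    rw [Finset.mem_sdiff, Finset.mem_union] at hs
    by_contra h
    exact hs.2 (Or.inr (by simp [hNSA, h]))
  have hE0 : E ∩ ((Finset.univ \ (A' ∪ NC B')) ×ˢ (Finset.univ \ (B' ∪ NS A'))) = ∅ := by
    apply Finset.eq_empty_of_forall_notMem
    rintro ⟨c, s⟩ hx
    rw [Finset.mem_inter, Finset.mem_product] at hx
    exact hind i c (hCsub hx.2.1) s (hSsub hx.2.2) hx.1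
  rw [hE0, Finset.sum_empty, hNCB, hNSA]
  have hbl := hblock i
  rw [hNCBi, hNSAi] at hbl
  have h1 : ∑ x ∈ (Finset.univ \ A i) ×ˢ (Finset.univ : Finset S), μ x
      = ∑ x ∈ (Finset.univ \ A i) ×ˢ B i, μ x
        + ∑ x ∈ (Finset.univ \ A i) ×ˢ (Finset.univ \ B i), μ x :=
    split_right_aux μ _ _
  have h2 : ∑ x ∈ (Finset.univ : Finset C) ×ˢ (Finset.univ \ B i), μ x
      = ∑ x ∈ A i ×ˢ (Finset.univ \ B i), μ x
        + ∑ x ∈ (Finset.univ \ A i) ×ˢ (Finset.univ \ B i), μ x :=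
    split_left_aux μ _ _
  have h3 : (1 : ℝ)
      = ∑ x ∈ A i ×ˢ B i, μ x + ∑ x ∈ A i ×ˢ (Finset.univ \ B i), μ x
        + (∑ x ∈ (Finset.univ \ A i) ×ˢ B i, μ x
          + ∑ x ∈ (Finset.univ \ A i) ×ˢ (Finset.univ \ B i), μ x) := by
    rw [← split_right_aux μ (A i) (B i), ← split_right_aux μ (Finset.univ \ A i) (B i),
      ← split_left_aux μ (A i) (Finset.univ : Finset S), ← hμ1]
    rw [Finset.univ_product_univ]
  linarith
end

section
/- Let n ≥ 2, k ≠ k' two indices in {1,…,n}, and x, x' : {1,…,n} → ℤ. Suppose x(k') ≤ x(k) and x'(k) ≤ x'(k') (as occurs when a 'Match the Longest' rule selects class k in state x and class k' in state x'), and suppose it is not the case that x(k) = x(k') = x'(k) = x'(k'). Then |x(k) − 1 − x'(k)| + |x(k') − (x'(k') − 1)| ≤ |x(k) − x'(k)| + |x(k') − x'(k')|. -/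
/-- Key arithmetic step in the non-expansiveness of 'Match the Longest': if the
ML rule selects class `k` in state `x` (so `x k' ≤ x k`) and class `k'` in state `x'`
(so `x' k ≤ x' k'`), and not all four values are equal, then decrementing coordinate
`k` of `x` and coordinate `k'` of `x'` does not increase the ℓ1 distance on
coordinates `k, k'`. -/
theorem ml_nonexpansive_arith (n : ℕ) (hn : 2 ≤ n) (k k' : Fin n) (hkk' : k ≠ k')
    (x x' : Fin n → ℤ)
    (h1 : x k' ≤ x k) (h2 : x' k ≤ x' k')
    (h3 : ¬ (x k = x k' ∧ x k' = x' k ∧ x' k = x' k')) :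
    |x k - 1 - x' k| + |x k' - (x' k' - 1)| ≤ |x k - x' k| + |x k' - x' k'| := by
  rcases abs_cases (x k - 1 - x' k) with ⟨e1,_⟩|⟨e1,_⟩ <;>
  rcases abs_cases (x k' - (x' k' - 1)) with ⟨e2,_⟩|⟨e2,_⟩ <;>
  rcases abs_cases (x k - x' k) with ⟨e3,_⟩|⟨e3,_⟩ <;>
  rcases abs_cases (x k' - x' k') with ⟨e4,_⟩|⟨e4,_⟩ <;>
  omega
end
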